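/- arXiv:2001.01878 — 7 statements merged into one kernel-verified Lean document; each statement's English description precedes it below -/
import Mathlib

section
/- (Equality condition for B = C in Eq. (9).) For a function r : X × Z → ℝ, equality B(r) = C(r) holds if and only if for every z the value r̄(y,z) = (∑_x p(x,y) q(x,z) r(x,z)) / p(y,z) is independent of y, i.e. r̄(y,z) = r̄(z) for all y, z. -/
/-! For fixed `z`, the `z`-summand of `B - C` is the Cauchy–Schwarz gap
`∑_y s_y² / a_y - (∑_y s_y)² / ∑_y a_y` with `a_y = p(y,z)` and `s_y = p(y,z) r̄(y,z)`, which equals the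
weighted variance `∑_y a_y (r̄(y,z) - r̄(z))²`. Hence `B - C` is a sum of nonnegative terms with
positive weights `p(y,z)`, vanishing exactly when every `r̄(y,z) = r̄(z)`. -/

open Finset Filter Matrix

variable {X Y Z : Type*} [Fintype X] [Fintype Y] [Fintype Z]

/-- marginal p(x) = ∑_y p(x,y) -/
noncomputable def pX (p : X → Y → ℝ) (x : X) : ℝ := ∑ y, p x y

/-- marginal p(y) = ∑_x p(x,y) -/
noncomputable def pY (p : X → Y → ℝ) (y : Y) : ℝ := ∑ x, p x y

/-- marginal p(z) = ∑_x p(x) q(x,z) -/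
noncomputable def pZ (p : X → Y → ℝ) (q : X → Z → ℝ) (z : Z) : ℝ := ∑ x, pX p x * q x z

/-- joint p(y,z) = ∑_x p(x,y) q(x,z) -/
noncomputable def pYZ (p : X → Y → ℝ) (q : X → Z → ℝ) (y : Y) (z : Z) : ℝ := ∑ x, p x y * q x z

/-- A(r) = ∑_{x,z} p(x) q(x,z) r(x,z)² -/
noncomputable def termA (p : X → Y → ℝ) (q : X → Z → ℝ) (r : X → Z → ℝ) : ℝ :=
  ∑ x, ∑ z, pX p x * q x z * r x z ^ 2

/-- C(r) = ∑_z (∑_x p(x) q(x,z) r(x,z))² / p(z) -/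
noncomputable def termC (p : X → Y → ℝ) (q : X → Z → ℝ) (r : X → Z → ℝ) : ℝ :=
  ∑ z, (∑ x, pX p x * q x z * r x z) ^ 2 / pZ p q z

/-- B(r) = ∑_{y,z} (∑_x p(x,y) q(x,z) r(x,z))² / p(y,z) -/
noncomputable def termB (p : X → Y → ℝ) (q : X → Z → ℝ) (r : X → Z → ℝ) : ℝ :=
  ∑ y, ∑ z, (∑ x, p x y * q x z * r x z) ^ 2 / pYZ p q y z

/-- r̄(z) = (∑_x p(x) q(x,z) r(x,z)) / p(z) -/
noncomputable def rbarZ (p : X → Y → ℝ) (q : X → Z → ℝ) (r : X → Z → ℝ) (z : Z) : ℝ :=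
  (∑ x, pX p x * q x z * r x z) / pZ p q z

/-- r̄(y,z) = (∑_x p(x,y) q(x,z) r(x,z)) / p(y,z) -/
noncomputable def rbarYZ (p : X → Y → ℝ) (q : X → Z → ℝ) (r : X → Z → ℝ) (y : Y) (z : Z) : ℝ :=
  (∑ x, p x y * q x z * r x z) / pYZ p q y z

namespace Finset

variable {ι : Type*} {s : Finset ι}

theorem sum_sq_div_sub_sq_sum_div_sum (w f : ι → ℝ) (hw : ∀ i ∈ s, w i ≠ 0) :
    ∑ i ∈ s, f i ^ 2 / w i - (∑ i ∈ s, f i) ^ 2 / ∑ i ∈ s, w i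
      = ∑ i ∈ s, w i * (f i / w i - (∑ j ∈ s, f j) / ∑ j ∈ s, w j) ^ 2 := by
  set c := (∑ j ∈ s, f j) / ∑ j ∈ s, w j
  have expand : ∀ i ∈ s, w i * (f i / w i - c) ^ 2 = f i ^ 2 / w i - 2 * c * f i + c ^ 2 * w i := by
    intro i hi
    field_simp [hw i hi]
    ring
  rw [sum_congr rfl expand, sum_add_distrib, sum_sub_distrib, ← mul_sum, ← mul_sum]
  by_cases hW : ∑ i ∈ s, w i = 0
  · -- then `c = 0` by the convention `x / 0 = 0`
    simp [c, hW]
  · simp only [c]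
    field_simp
    ring

theorem sum_mul_sq_eq_zero_iff {w f : ι → ℝ} (hw : ∀ i ∈ s, 0 < w i) :
    ∑ i ∈ s, w i * f i ^ 2 = 0 ↔ ∀ i ∈ s, f i = 0 := by
  rw [sum_eq_zero_iff_of_nonneg fun i hi => by have := hw i hi; positivity]
  exact forall₂_congr fun i hi => by simp [(hw i hi).ne']

end Finset

theorem termB_sub_termC (p : X → Y → ℝ) (q : X → Z → ℝ) (r : X → Z → ℝ)
    (hpYZ : ∀ y z, pYZ p q y z ≠ 0) :
    termB p q r - termC p q r
      = ∑ y, ∑ z, pYZ p q y z * (rbarYZ p q r y z - rbarZ p q r z) ^ 2 := by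
  have sum_pYZ : ∀ z, ∑ y, pYZ p q y z = pZ p q z := fun z => by
    simp only [pYZ, pZ, pX, sum_mul]
    exact sum_comm
  have sum_numerator : ∀ z, ∑ y, ∑ x, p x y * q x z * r x z = ∑ x, pX p x * q x z * r x z :=
    fun z => by
      simp only [pX, sum_mul]
      exact sum_comm
  rw [termB, termC, sum_comm, ← sum_sub_distrib, sum_comm]
  refine sum_congr rfl fun z _ => ?_
  have := sum_sq_div_sub_sq_sum_div_sum (s := univ) (fun y => pYZ p q y z)
    (fun y => ∑ x, p x y * q x z * r x z) fun y _ => hpYZ y z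
  simpa only [sum_pYZ, sum_numerator, rbarYZ, rbarZ] using this

theorem eq_B_C_iff_general [Nonempty X]
    (p : X → Y → ℝ) (q : X → Z → ℝ)
    (hp : ∀ x y, 0 < p x y)
    (hq : ∀ x z, 0 < q x z)
    (r : X → Z → ℝ) :
    termB p q r = termC p q r ↔ ∀ y z, rbarYZ p q r y z = rbarZ p q r z := by
  have hpYZ : ∀ y z, 0 < pYZ p q y z := fun y z =>
    sum_pos (fun x _ => mul_pos (hp x y) (hq x z)) univ_nonempty
  rw [← sub_eq_zero, termB_sub_termC p q r fun y z => (hpYZ y z).ne', ← Fintype.sum_prod_type',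
    sum_mul_sq_eq_zero_iff fun yz _ => hpYZ yz.1 yz.2]
  simp only [mem_univ, forall_const, Prod.forall, sub_eq_zero]

/-- Equality condition for B = C in Eq. (9): B(r) = C(r) iff r̄(y,z) is independent of y. -/
theorem eq_B_C_iff [Nonempty X] [Nonempty Y] [Nonempty Z]
    (p : X → Y → ℝ) (q : X → Z → ℝ)
    (hp : ∀ x y, 0 < p x y) (hpsum : ∑ x, ∑ y, p x y = 1)
    (hq : ∀ x z, 0 < q x z) (hqsum : ∀ x, ∑ z, q x z = 1)
    (r : X → Z → ℝ) :
    termB p q r = termC p q r ↔ ∀ y z, rbarYZ p q r y z = rbarZ p q r z :=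
  eq_B_C_iff_general p q hp hq r
end

section
/- (Equality condition for A = B in Eq. (9).) For a function r : X × Z → ℝ, equality A(r) = B(r) holds if and only if for every z the function x ↦ r(x,z) is constant, i.e. there exists c : Z → ℝ with r(x,z) = c(z) for all x, z. -/
/-!
Regroup `A(r)` by `(y, z)`: each block `∑ₓ p(x,y) q(x,z) r(x,z)²` exceeds the corresponding term of
`B(r)` by the variance of `x ↦ r(x,z)` under the weights `p(x,y) q(x,z)`. Hence `A(r) - B(r)` is a sum
of nonnegative variances, and it vanishes iff each of them does, i.e. iff `r(·,z)` is constant.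
-/

open Finset Filter Matrix

variable {X Y Z : Type*} [Fintype X] [Fintype Y] [Fintype Z]

namespace Finset

variable {ι : Type*} (s : Finset ι) (w f : ι → ℝ)

/-- If `∑ w = 0`, both sides hold through the junk value `x / 0 = 0`. -/
theorem sum_mul_sq_sub_sq_sum_div_eq_sum_mul_sq_sub :
    ∑ i ∈ s, w i * f i ^ 2 - (∑ i ∈ s, w i * f i) ^ 2 / ∑ i ∈ s, w i =
      ∑ i ∈ s, w i * (f i - (∑ j ∈ s, w j * f j) / ∑ j ∈ s, w j) ^ 2 := by
  set W := ∑ i ∈ s, w i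
  set m := (∑ i ∈ s, w i * f i) / W
  have hexpand : ∀ i, w i * (f i - m) ^ 2 = w i * f i ^ 2 - 2 * m * (w i * f i) + m ^ 2 * w i :=
    fun i => by ring
  simp only [hexpand, sum_add_distrib, sum_sub_distrib, ← mul_sum]
  by_cases hW : W = 0
  · simp [m, hW]
  · simp only [m]
    field_simp
    ring

variable {s w}

theorem sq_sum_div_le_sum_mul_sq (hw : ∀ i ∈ s, 0 ≤ w i) :
    (∑ i ∈ s, w i * f i) ^ 2 / ∑ i ∈ s, w i ≤ ∑ i ∈ s, w i * f i ^ 2 := by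
  rw [← sub_nonneg, sum_mul_sq_sub_sq_sum_div_eq_sum_mul_sq_sub]
  exact sum_nonneg fun i hi => mul_nonneg (hw i hi) (sq_nonneg _)

theorem sq_sum_div_eq_sum_mul_sq_iff (hw : ∀ i ∈ s, 0 < w i) :
    (∑ i ∈ s, w i * f i) ^ 2 / ∑ i ∈ s, w i = ∑ i ∈ s, w i * f i ^ 2 ↔
      ∃ c, ∀ i ∈ s, f i = c := by
  set m := (∑ j ∈ s, w j * f j) / ∑ j ∈ s, w j
  rw [eq_comm, ← sub_eq_zero, sum_mul_sq_sub_sq_sum_div_eq_sum_mul_sq_sub,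
    sum_eq_zero_iff_of_nonneg fun i hi => mul_nonneg (hw i hi).le (sq_nonneg _)]
  have hterm : ∀ i ∈ s, w i * (f i - m) ^ 2 = 0 ↔ f i = m := fun i hi => by
    rw [mul_eq_zero, sq_eq_zero_iff, sub_eq_zero, or_iff_right (hw i hi).ne']
  constructor
  · exact fun h => ⟨m, fun i hi => (hterm i hi).1 (h i hi)⟩
  · rintro ⟨c, hc⟩ i hi
    have hW : ∑ j ∈ s, w j ≠ 0 := (sum_pos' (fun j hj => (hw j hj).le) ⟨i, hi, hw i hi⟩).ne'
    have hm : m = c := by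
      rw [div_eq_iff hW, mul_sum]
      exact sum_congr rfl fun j hj => by rw [hc j hj, mul_comm]
    rw [hterm i hi, hm, hc i hi]

end Finset

theorem termA_eq_sum_sum_sum (p : X → Y → ℝ) (q r : X → Z → ℝ) :
    termA p q r = ∑ y, ∑ z, ∑ x, p x y * q x z * r x z ^ 2 := by
  simp only [termA, pX, sum_mul]
  exact (sum_congr rfl fun x _ => sum_comm).trans (sum_comm.trans (sum_congr rfl fun y _ => sum_comm))

theorem eq_A_B_iff_general [Nonempty Y]
    (p : X → Y → ℝ) (q : X → Z → ℝ)
    (hp : ∀ x y, 0 < p x y)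
    (hq : ∀ x z, 0 < q x z)
    (r : X → Z → ℝ) :
    termA p q r = termB p q r ↔ ∃ c : Z → ℝ, ∀ x z, r x z = c z := by
  have hw : ∀ y z, ∀ x ∈ univ, 0 < p x y * q x z := fun y z x _ => mul_pos (hp x y) (hq x z)
  have hle : ∀ y z, (∑ x, p x y * q x z * r x z) ^ 2 / pYZ p q y z ≤
      ∑ x, p x y * q x z * r x z ^ 2 :=
    fun y z => sq_sum_div_le_sum_mul_sq _ fun x hx => (hw y z x hx).le
  have hblock : ∀ y, (∑ z, (∑ x, p x y * q x z * r x z) ^ 2 / pYZ p q y z =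
      ∑ z, ∑ x, p x y * q x z * r x z ^ 2) ↔ ∀ z, ∃ c, ∀ x, r x z = c := fun y => by
    rw [sum_eq_sum_iff_of_le fun z _ => hle y z]
    simpa only [mem_univ, forall_const, pYZ] using
      forall_congr' fun z => sq_sum_div_eq_sum_mul_sq_iff (fun x => r x z) (hw y z)
  rw [eq_comm, termA_eq_sum_sum_sum, termB,
    sum_eq_sum_iff_of_le fun y _ => sum_le_sum fun z _ => hle y z]
  simp only [mem_univ, forall_const, hblock, Classical.skolem]
  exact exists_congr fun c => forall_comm

/-- Equality condition for A = B in Eq. (9): A(r) = B(r) iff r(x,z) is constant in x. -/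
theorem eq_A_B_iff [Nonempty X] [Nonempty Y] [Nonempty Z]
    (p : X → Y → ℝ) (q : X → Z → ℝ)
    (hp : ∀ x y, 0 < p x y) (hpsum : ∑ x, ∑ y, p x y = 1)
    (hq : ∀ x z, 0 < q x z) (hqsum : ∀ x, ∑ z, q x z = 1)
    (r : X → Z → ℝ) :
    termA p q r = termB p q r ↔ ∃ c : Z → ℝ, ∀ x z, r x z = c z :=
  eq_A_B_iff_general p q hp hq r
end

section
/- (First variation of the IB objective, first-order term of Lemma A.1.) Let r : X × Z → ℝ satisfy ∑_z q(x,z) r(x,z) = 0 for every x. Then the function F is differentiable at ε = 0 and F′(0) = ∑_{x,z} p(x) q(x,z) r(x,z) · log(q(x,z)/p(z)) − β · ∑_{y,z} p(y,z) r̄(y,z) · log(p(y,z)/(p(y) p(z))). -/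
open Finset Filter Matrix

variable {X Y Z : Type*} [Fintype X] [Fintype Y] [Fintype Z]

/-- perturbed marginal p_ε(z) -/
noncomputable def pZe (p : X → Y → ℝ) (q : X → Z → ℝ) (r : X → Z → ℝ) (ε : ℝ) (z : Z) : ℝ :=
  ∑ x, pX p x * (q x z * (1 + ε * r x z))

/-- perturbed joint p_ε(y,z) -/
noncomputable def pYZe (p : X → Y → ℝ) (q : X → Z → ℝ) (r : X → Z → ℝ) (ε : ℝ) (y : Y) (z : Z) : ℝ :=
  ∑ x, p x y * (q x z * (1 + ε * r x z))

/-- perturbed IB objective F(ε) = I_ε(X;Z) - β I_ε(Y;Z) -/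
noncomputable def IBfun (p : X → Y → ℝ) (q : X → Z → ℝ) (r : X → Z → ℝ) (β : ℝ) (ε : ℝ) : ℝ :=
  (∑ x, ∑ z, pX p x * (q x z * (1 + ε * r x z)) *
      Real.log (q x z * (1 + ε * r x z) / pZe p q r ε z))
    - β * ∑ y, ∑ z, pYZe p q r ε y z * Real.log (pYZe p q r ε y z / (pY p y * pZe p q r ε z))

/-!
Since `p_ε(z) = p(z) (1 + ε r̄(z))` and `p_ε(y,z) = p(y,z) (1 + ε r̄(y,z))`, every summand of
both mutual informations has the shape `c (1 + ε a) log (c (1 + ε a) / (d (1 + ε b)))`, whose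
derivative at `0` is `c a log (c / d) + c (a - b)`. The correction terms `c (a - b)` add up to
zero: summing over `x` resp. `y` turns their `b`-parts into `∑_z p(z) r̄(z)`, and this as well as
`∑_{x,z} p(x) q(x,z) r(x,z)` and `∑_{y,z} p(y,z) r̄(y,z)` vanish because `∑_z q(x,z) r(x,z) = 0`.
-/

open Real

theorem hasDerivAt_mul_log_div_affine {a b c d : ℝ} (hc : c ≠ 0) (hd : d ≠ 0) :
    HasDerivAt (fun ε => c * (1 + ε * a) * log (c * (1 + ε * a) / (d * (1 + ε * b))))
      (c * a * log (c / d) + c * (a - b)) 0 := by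
  have hline : ∀ k e : ℝ, HasDerivAt (fun ε => k * (1 + ε * e)) (k * e) 0 := fun k e => by
    simpa using (((hasDerivAt_id (0 : ℝ)).mul_const e).const_add 1).const_mul k
  have hlog := ((hline c a).fun_div (hline d b) (by simpa using hd)).log
    (by simpa using div_ne_zero hc hd)
  refine ((hline c a).fun_mul hlog).congr_deriv ?_
  simp only [zero_mul, add_zero, mul_one]
  field_simp

section Perturbation

variable {p : X → Y → ℝ} {q r : X → Z → ℝ}

omit [Fintype Z] in
theorem pZe_eq_mul {z : Z} (hz : pZ p q z ≠ 0) (ε : ℝ) :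
    pZe p q r ε z = pZ p q z * (1 + ε * rbarZ p q r z) := by
  rw [rbarZ, mul_add, mul_one, mul_left_comm, mul_div_cancel₀ _ hz]
  simp only [pZe, pZ, mul_add, mul_one, sum_add_distrib, mul_sum]
  congr 1
  exact sum_congr rfl fun x _ => by ring

omit [Fintype Y] [Fintype Z] in
theorem pYZe_eq_mul {y : Y} {z : Z} (hyz : pYZ p q y z ≠ 0) (ε : ℝ) :
    pYZe p q r ε y z = pYZ p q y z * (1 + ε * rbarYZ p q r y z) := by
  rw [rbarYZ, mul_add, mul_one, mul_left_comm, mul_div_cancel₀ _ hyz]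
  simp only [pYZe, pYZ, mul_add, mul_one, sum_add_distrib, mul_sum]
  congr 1
  exact sum_congr rfl fun x _ => by ring

omit [Fintype Z] in
theorem sum_pYZ (z : Z) : ∑ y, pYZ p q y z = pZ p q z := by
  simp only [pYZ, pZ, pX, sum_mul]
  exact sum_comm

theorem sum_sum_mul_mul_eq_zero (w : X → ℝ) (hr : ∀ x, ∑ z, q x z * r x z = 0) :
    ∑ x, ∑ z, w x * q x z * r x z = 0 :=
  sum_eq_zero fun x _ => by simp only [mul_assoc, ← mul_sum, hr x, mul_zero]

theorem sum_pZ_mul_rbarZ (hpZ : ∀ z, pZ p q z ≠ 0) (hr : ∀ x, ∑ z, q x z * r x z = 0) :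
    ∑ z, pZ p q z * rbarZ p q r z = 0 := by
  simp only [rbarZ, mul_div_cancel₀ _ (hpZ _)]
  rw [sum_comm]
  exact sum_sum_mul_mul_eq_zero _ hr

theorem sum_sum_pYZ_mul_rbarYZ (hpYZ : ∀ y z, pYZ p q y z ≠ 0)
    (hr : ∀ x, ∑ z, q x z * r x z = 0) :
    ∑ y, ∑ z, pYZ p q y z * rbarYZ p q r y z = 0 := by
  simp only [rbarYZ, mul_div_cancel₀ _ (hpYZ _ _)]
  exact sum_eq_zero fun y _ => by rw [sum_comm]; exact sum_sum_mul_mul_eq_zero _ hr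

theorem sum_sum_pX_mul_q_mul_sub_rbarZ (hpZ : ∀ z, pZ p q z ≠ 0)
    (hr : ∀ x, ∑ z, q x z * r x z = 0) :
    ∑ x, ∑ z, pX p x * q x z * (r x z - rbarZ p q r z) = 0 := by
  calc ∑ x, ∑ z, pX p x * q x z * (r x z - rbarZ p q r z)
      = ∑ x, ∑ z, pX p x * q x z * r x z - ∑ z, pZ p q z * rbarZ p q r z := by
        simp only [mul_sub, sum_sub_distrib, pZ, sum_mul]
        rw [sum_comm (f := fun x z => pX p x * q x z * rbarZ p q r z)]
    _ = 0 := by rw [sum_sum_mul_mul_eq_zero _ hr, sum_pZ_mul_rbarZ hpZ hr, sub_zero]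

theorem sum_sum_pYZ_mul_sub_rbarZ (hpZ : ∀ z, pZ p q z ≠ 0) (hpYZ : ∀ y z, pYZ p q y z ≠ 0)
    (hr : ∀ x, ∑ z, q x z * r x z = 0) :
    ∑ y, ∑ z, pYZ p q y z * (rbarYZ p q r y z - rbarZ p q r z) = 0 := by
  calc ∑ y, ∑ z, pYZ p q y z * (rbarYZ p q r y z - rbarZ p q r z)
      = ∑ y, ∑ z, pYZ p q y z * rbarYZ p q r y z - ∑ z, pZ p q z * rbarZ p q r z := by
        simp only [mul_sub, sum_sub_distrib, ← sum_pYZ, sum_mul]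
        rw [sum_comm (f := fun y z => pYZ p q y z * rbarZ p q r z)]
    _ = 0 := by rw [sum_sum_pYZ_mul_rbarYZ hpYZ hr, sum_pZ_mul_rbarZ hpZ hr, sub_zero]

variable (p q r)

noncomputable def perturbedInfoXZ (ε : ℝ) : ℝ :=
  ∑ x, ∑ z, pX p x * (q x z * (1 + ε * r x z)) * log (q x z * (1 + ε * r x z) / pZe p q r ε z)

noncomputable def perturbedInfoYZ (ε : ℝ) : ℝ :=
  ∑ y, ∑ z, pYZe p q r ε y z * log (pYZe p q r ε y z / (pY p y * pZe p q r ε z))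

theorem IBfun_eq (β : ℝ) :
    IBfun p q r β = fun ε => perturbedInfoXZ p q r ε - β * perturbedInfoYZ p q r ε :=
  rfl

variable {p q r}

theorem hasDerivAt_perturbedInfoXZ (hq : ∀ x z, q x z ≠ 0) (hpZ : ∀ z, pZ p q z ≠ 0)
    (hr : ∀ x, ∑ z, q x z * r x z = 0) :
    HasDerivAt (perturbedInfoXZ p q r)
      (∑ x, ∑ z, pX p x * q x z * r x z * log (q x z / pZ p q z)) 0 := by
  have hterm : ∀ x z, HasDerivAt
      (fun ε => pX p x * (q x z * (1 + ε * r x z)) *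
        log (q x z * (1 + ε * r x z) / pZe p q r ε z))
      (pX p x * q x z * r x z * log (q x z / pZ p q z)
        + pX p x * q x z * (r x z - rbarZ p q r z)) 0 := by
    intro x z
    simp_rw [pZe_eq_mul (hpZ z), mul_assoc (pX p x)]
    refine ((hasDerivAt_mul_log_div_affine (hq x z) (hpZ z)).const_mul (pX p x)).congr_deriv ?_
    ring
  have hsum := HasDerivAt.fun_sum (u := univ) fun x _ =>
    HasDerivAt.fun_sum (u := univ) fun z _ => hterm x z
  simp only [sum_add_distrib] at hsum
  rwa [sum_sum_pX_mul_q_mul_sub_rbarZ hpZ hr, add_zero] at hsum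

theorem hasDerivAt_perturbedInfoYZ (hpY : ∀ y, pY p y ≠ 0) (hpZ : ∀ z, pZ p q z ≠ 0)
    (hpYZ : ∀ y z, pYZ p q y z ≠ 0) (hr : ∀ x, ∑ z, q x z * r x z = 0) :
    HasDerivAt (perturbedInfoYZ p q r)
      (∑ y, ∑ z, pYZ p q y z * rbarYZ p q r y z *
        log (pYZ p q y z / (pY p y * pZ p q z))) 0 := by
  have hterm : ∀ y z, HasDerivAt
      (fun ε => pYZe p q r ε y z * log (pYZe p q r ε y z / (pY p y * pZe p q r ε z)))
      (pYZ p q y z * rbarYZ p q r y z * log (pYZ p q y z / (pY p y * pZ p q z))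
        + pYZ p q y z * (rbarYZ p q r y z - rbarZ p q r z)) 0 := by
    intro y z
    simp_rw [pZe_eq_mul (hpZ z), pYZe_eq_mul (hpYZ y z), ← mul_assoc (pY p y)]
    exact hasDerivAt_mul_log_div_affine (hpYZ y z) (mul_ne_zero (hpY y) (hpZ z))
  have hsum := HasDerivAt.fun_sum (u := univ) fun y _ =>
    HasDerivAt.fun_sum (u := univ) fun z _ => hterm y z
  simp only [sum_add_distrib] at hsum
  rwa [sum_sum_pYZ_mul_sub_rbarZ hpZ hpYZ hr, add_zero] at hsum

end Perturbation

theorem first_variation_IB_general [Nonempty X] [Nonempty Y]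
    (p : X → Y → ℝ) (q : X → Z → ℝ)
    (hp : ∀ x y, 0 < p x y)
    (hq : ∀ x z, 0 < q x z)
    (β : ℝ) (r : X → Z → ℝ) (hr : ∀ x, ∑ z, q x z * r x z = 0) :
    HasDerivAt (IBfun p q r β)
      ((∑ x, ∑ z, pX p x * q x z * r x z * Real.log (q x z / pZ p q z))
        - β * ∑ y, ∑ z, pYZ p q y z * rbarYZ p q r y z *
            Real.log (pYZ p q y z / (pY p y * pZ p q z))) 0 := by
  have hpX : ∀ x, 0 < pX p x := fun x => sum_pos (fun y _ => hp x y) univ_nonempty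
  have hpY : ∀ y, 0 < pY p y := fun y => sum_pos (fun x _ => hp x y) univ_nonempty
  have hpZ : ∀ z, 0 < pZ p q z := fun z =>
    sum_pos (fun x _ => mul_pos (hpX x) (hq x z)) univ_nonempty
  have hpYZ : ∀ y z, 0 < pYZ p q y z := fun y z =>
    sum_pos (fun x _ => mul_pos (hp x y) (hq x z)) univ_nonempty
  rw [IBfun_eq]
  exact (hasDerivAt_perturbedInfoXZ (fun x z => (hq x z).ne') (fun z => (hpZ z).ne') hr).sub
    ((hasDerivAt_perturbedInfoYZ (fun y => (hpY y).ne') (fun z => (hpZ z).ne')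
      (fun y z => (hpYZ y z).ne') hr).const_mul β)

/-- First variation of the IB objective (first-order term of Lemma A.1). -/
theorem first_variation_IB [Nonempty X] [Nonempty Y] [Nonempty Z]
    (p : X → Y → ℝ) (q : X → Z → ℝ)
    (hp : ∀ x y, 0 < p x y) (hpsum : ∑ x, ∑ y, p x y = 1)
    (hq : ∀ x z, 0 < q x z) (hqsum : ∀ x, ∑ z, q x z = 1)
    (β : ℝ) (r : X → Z → ℝ) (hr : ∀ x, ∑ z, q x z * r x z = 0) :
    HasDerivAt (IBfun p q r β)
      ((∑ x, ∑ z, pX p x * q x z * r x z * Real.log (q x z / pZ p q z))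
        - β * ∑ y, ∑ z, pYZ p q y z * rbarYZ p q r y z *
            Real.log (pYZ p q y z / (pY p y * pZ p q z))) 0 :=
  first_variation_IB_general p q hp hq β r hr
end

section
/- (Second variation of the IB objective, Eq. (21), the key identity behind Lemma 1.) Let r : X × Z → ℝ satisfy ∑_z q(x,z) r(x,z) = 0 for every x. Then F is twice differentiable at ε = 0 and F″(0) = (A(r) − C(r)) − β · (B(r) − C(r)). -/
open Finset Filter Matrix

variable {X Y Z : Type*} [Fintype X] [Fintype Y] [Fintype Z]

/-!
Where every `1 + ε r(x,z)` is positive, both mutual informations split as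
`I(A;B) = H(A) + H(B) - H(A,B)`. Since `∑_z q_ε(x,z) = 1`, the entropies `H(X)` and `H(Y)` do not
move, while `p_ε(z)`, `p(x) q_ε(x,z)` and `p_ε(y,z)` are affine in `ε`. For a law `a + ε b` the
entropy has second derivative `-∑ b² / a` at `0`, which is `-C`, `-A` and `-B` for these three.
-/

open Real Topology

section AffineEntropy

variable {ι : Type*} [Fintype ι] (a b : ι → ℝ)

noncomputable def affineEntropy (t : ℝ) : ℝ := ∑ i, negMulLog (a i + b i * t)

noncomputable def affineEntropyDeriv (t : ℝ) : ℝ := ∑ i, b i * (-log (a i + b i * t) - 1)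

variable {a b}

theorem hasDerivAt_add_mul (c d t : ℝ) : HasDerivAt (fun s => c + d * s) d t := by
  simpa using ((hasDerivAt_id t).const_mul d).const_add c

theorem hasDerivAt_affineEntropy {t : ℝ} (h : ∀ i, a i + b i * t ≠ 0) :
    HasDerivAt (affineEntropy a b) (affineEntropyDeriv a b t) t := by
  unfold affineEntropy affineEntropyDeriv
  refine HasDerivAt.fun_sum fun i _ => ?_
  exact ((hasDerivAt_negMulLog (h i)).comp t (hasDerivAt_add_mul (a i) (b i) t)).congr_deriv
    (mul_comm _ _)

theorem hasDerivAt_affineEntropyDeriv {t : ℝ} (h : ∀ i, a i + b i * t ≠ 0) :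
    HasDerivAt (affineEntropyDeriv a b) (-∑ i, b i ^ 2 / (a i + b i * t)) t := by
  unfold affineEntropyDeriv
  rw [← Finset.sum_neg_distrib]
  refine HasDerivAt.fun_sum fun i _ => ?_
  have hlog := (hasDerivAt_log (h i)).comp t (hasDerivAt_add_mul (a i) (b i) t)
  refine ((hlog.neg.sub_const 1).const_mul (b i)).congr_deriv ?_
  field_simp

theorem affineEntropy_second_deriv_zero (ha : ∀ i, a i ≠ 0) :
    (∀ᶠ t in 𝓝 0, HasDerivAt (affineEntropy a b) (affineEntropyDeriv a b t) t) ∧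
      HasDerivAt (affineEntropyDeriv a b) (-∑ i, b i ^ 2 / a i) 0 := by
  have hne : ∀ᶠ t in 𝓝 (0 : ℝ), ∀ i, a i + b i * t ≠ 0 :=
    eventually_all.2 fun i => (hasDerivAt_add_mul (a i) (b i) 0).continuousAt.eventually_ne
      (by simpa using ha i)
  refine ⟨hne.mono fun t => hasDerivAt_affineEntropy, ?_⟩
  simpa using hasDerivAt_affineEntropyDeriv (t := 0) (by simpa using ha)

end AffineEntropy

theorem second_deriv_of_eventually_hasDerivAt {f f' : ℝ → ℝ} {x f'' : ℝ}
    (hf : ∀ᶠ t in 𝓝 x, HasDerivAt f (f' t) t) (hf' : HasDerivAt f' f'' x) :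
    (∀ᶠ t in 𝓝 x, DifferentiableAt ℝ f t) ∧ DifferentiableAt ℝ (deriv f) x ∧
      deriv (deriv f) x = f'' := by
  have hderiv : deriv f =ᶠ[𝓝 x] f' := hf.mono fun t ht => ht.deriv
  have h2 := hf'.congr_of_eventuallyEq hderiv
  exact ⟨hf.mono fun t ht => ht.differentiableAt, h2.differentiableAt, h2.deriv⟩

/-- `I(A;B) = H(A) + H(B) - H(A,B)`, for positive weights that need not be normalised. -/
theorem sum_mul_log_div_marginals {α β : Type*} [Fintype α] [Fintype β]
    {w : α → β → ℝ} {u : α → ℝ} {v : β → ℝ} (hw : ∀ a b, 0 < w a b)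
    (hu : ∀ a, ∑ b, w a b = u a) (hv : ∀ b, ∑ a, w a b = v b) :
    ∑ a, ∑ b, w a b * log (w a b / (u a * v b)) =
      (∑ a, negMulLog (u a)) + (∑ b, negMulLog (v b)) - ∑ a, ∑ b, negMulLog (w a b) := by
  have hu_pos : ∀ a b, 0 < u a := fun a b =>
    (hu a).symm ▸ (hw a b).trans_le (single_le_sum (fun b' _ => (hw a b').le) (mem_univ b))
  have hv_pos : ∀ a b, 0 < v b := fun a b =>
    (hv b).symm ▸ (hw a b).trans_le (single_le_sum (fun a' _ => (hw a' b).le) (mem_univ a))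
  have hterm : ∀ a b, w a b * log (w a b / (u a * v b)) =
      -negMulLog (w a b) - w a b * log (u a) - w a b * log (v b) := fun a b => by
    rw [log_div (hw a b).ne' (mul_pos (hu_pos a b) (hv_pos a b)).ne',
      log_mul (hu_pos a b).ne' (hv_pos a b).ne', negMulLog]
    ring
  simp only [hterm, sum_sub_distrib, sum_neg_distrib]
  rw [sum_comm (f := fun a b => w a b * log (v b))]
  simp only [← sum_mul, hu, hv, negMulLog]
  simp only [neg_mul, sum_neg_distrib]
  ring

section InformationBottleneck

variable {p : X → Y → ℝ} {q : X → Z → ℝ} {r : X → Z → ℝ} {ε : ℝ}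

omit [Fintype X] in
theorem pX_pos [Nonempty Y] (hp : ∀ x y, 0 < p x y) (x : X) : 0 < pX p x :=
  sum_pos (fun y _ => hp x y) univ_nonempty

omit [Fintype Z] in
theorem pZ_pos [Nonempty X] [Nonempty Y] (hp : ∀ x y, 0 < p x y) (hq : ∀ x z, 0 < q x z)
    (z : Z) : 0 < pZ p q z :=
  sum_pos (fun x _ => mul_pos (pX_pos hp x) (hq x z)) univ_nonempty

omit [Fintype Y] [Fintype Z] in
theorem pYZ_pos [Nonempty X] (hp : ∀ x y, 0 < p x y) (hq : ∀ x z, 0 < q x z) (y : Y) (z : Z) :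
    0 < pYZ p q y z :=
  sum_pos (fun x _ => mul_pos (hp x y) (hq x z)) univ_nonempty

theorem eventually_one_add_mul_pos (r : X → Z → ℝ) :
    ∀ᶠ ε in 𝓝 (0 : ℝ), ∀ x z, 0 < 1 + ε * r x z :=
  eventually_all.2 fun x => eventually_all.2 fun z =>
    continuousAt_const.eventually_lt (by fun_prop) (by simp)

omit [Fintype X] in
theorem sum_perturbed_encoder (hqsum : ∀ x, ∑ z, q x z = 1)
    (hr : ∀ x, ∑ z, q x z * r x z = 0) (x : X) : ∑ z, q x z * (1 + ε * r x z) = 1 := by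
  simp only [mul_add, mul_one, mul_left_comm (q x _) ε, sum_add_distrib, ← mul_sum, hqsum x,
    hr x, mul_zero, add_zero]

omit [Fintype Y] in
theorem sum_pYZe_right (hqsum : ∀ x, ∑ z, q x z = 1) (hr : ∀ x, ∑ z, q x z * r x z = 0)
    (y : Y) : ∑ z, pYZe p q r ε y z = pY p y := by
  simp only [pYZe, pY]
  rw [sum_comm]
  simp only [← mul_sum, sum_perturbed_encoder hqsum hr, mul_one]

omit [Fintype Z] in
theorem sum_pYZe_left (z : Z) : ∑ y, pYZe p q r ε y z = pZe p q r ε z := by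
  simp only [pYZe, pZe, pX, sum_mul]
  exact sum_comm

omit [Fintype Z] in
theorem pZe_eq (z : Z) :
    pZe p q r ε z = pZ p q z + (∑ x, pX p x * q x z * r x z) * ε := by
  simp only [pZe, pZ, sum_mul, ← sum_add_distrib]
  exact sum_congr rfl fun x _ => by ring

omit [Fintype Y] [Fintype Z] in
theorem pYZe_eq (y : Y) (z : Z) :
    pYZe p q r ε y z = pYZ p q y z + (∑ x, p x y * q x z * r x z) * ε := by
  simp only [pYZe, pYZ, sum_mul, ← sum_add_distrib]
  exact sum_congr rfl fun x _ => by ring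

variable (p q r)

noncomputable def entropyZ : ℝ → ℝ :=
  affineEntropy (pZ p q) fun z => ∑ x, pX p x * q x z * r x z

noncomputable def entropyXZ : ℝ → ℝ :=
  affineEntropy (fun i : X × Z => pX p i.1 * q i.1 i.2) fun i => pX p i.1 * q i.1 i.2 * r i.1 i.2

noncomputable def entropyYZ : ℝ → ℝ :=
  affineEntropy (fun i : Y × Z => pYZ p q i.1 i.2) fun i => ∑ x, p x i.1 * q x i.2 * r x i.2

variable {p q r}

theorem entropyZ_apply : entropyZ p q r ε = ∑ z, negMulLog (pZe p q r ε z) := by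
  simp only [entropyZ, affineEntropy, pZe_eq]

theorem entropyXZ_apply :
    entropyXZ p q r ε = ∑ x, ∑ z, negMulLog (pX p x * (q x z * (1 + ε * r x z))) := by
  rw [entropyXZ, affineEntropy, Fintype.sum_prod_type]
  exact sum_congr rfl fun x _ => sum_congr rfl fun z _ => by ring_nf

theorem entropyYZ_apply : entropyYZ p q r ε = ∑ y, ∑ z, negMulLog (pYZe p q r ε y z) := by
  simp only [entropyYZ, affineEntropy, Fintype.sum_prod_type, pYZe_eq]

theorem IBfun_eq_entropy [Nonempty X] [Nonempty Y] (hp : ∀ x y, 0 < p x y)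
    (hq : ∀ x z, 0 < q x z) (hqsum : ∀ x, ∑ z, q x z = 1) (hr : ∀ x, ∑ z, q x z * r x z = 0)
    (hε : ∀ x z, 0 < 1 + ε * r x z) (β : ℝ) :
    IBfun p q r β ε =
      ((∑ x, negMulLog (pX p x)) + entropyZ p q r ε - entropyXZ p q r ε) -
        β * ((∑ y, negMulLog (pY p y)) + entropyZ p q r ε - entropyYZ p q r ε) := by
  have hXZ : ∀ x z, 0 < pX p x * (q x z * (1 + ε * r x z)) := fun x z =>
    mul_pos (pX_pos hp x) (mul_pos (hq x z) (hε x z))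
  have hYZ : ∀ y z, 0 < pYZe p q r ε y z := fun y z =>
    sum_pos (fun x _ => mul_pos (hp x y) (mul_pos (hq x z) (hε x z))) univ_nonempty
  have hIXZ := sum_mul_log_div_marginals (v := pZe p q r ε) hXZ
    (fun x => by rw [← mul_sum, sum_perturbed_encoder hqsum hr, mul_one]) (fun z => rfl)
  have hIYZ := sum_mul_log_div_marginals hYZ (sum_pYZe_right hqsum hr) sum_pYZe_left
  rw [IBfun, entropyZ_apply, entropyXZ_apply, entropyYZ_apply, ← hIXZ, ← hIYZ]
  congr 1
  refine sum_congr rfl fun x _ => sum_congr rfl fun z _ => ?_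
  rw [mul_div_mul_left _ _ (pX_pos hp x).ne']

theorem sum_sq_div_eq_termA [Nonempty Y] (hp : ∀ x y, 0 < p x y) (hq : ∀ x z, 0 < q x z) :
    ∑ i : X × Z, (pX p i.1 * q i.1 i.2 * r i.1 i.2) ^ 2 / (pX p i.1 * q i.1 i.2) = termA p q r := by
  rw [Fintype.sum_prod_type, termA]
  refine sum_congr rfl fun x _ => sum_congr rfl fun z _ => ?_
  have := (pX_pos hp x).ne'
  have := (hq x z).ne'
  field_simp

end InformationBottleneck

theorem second_variation_IB_general [Nonempty X] [Nonempty Y]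
    (p : X → Y → ℝ) (q : X → Z → ℝ)
    (hp : ∀ x y, 0 < p x y)
    (hq : ∀ x z, 0 < q x z) (hqsum : ∀ x, ∑ z, q x z = 1)
    (β : ℝ) (r : X → Z → ℝ) (hr : ∀ x, ∑ z, q x z * r x z = 0) :
    (∀ᶠ ε in nhds (0 : ℝ), DifferentiableAt ℝ (IBfun p q r β) ε) ∧
    DifferentiableAt ℝ (deriv (IBfun p q r β)) 0 ∧
    deriv (deriv (IBfun p q r β)) 0 =
      (termA p q r - termC p q r) - β * (termB p q r - termC p q r) := by
  obtain ⟨hZ, hZ''⟩ := affineEntropy_second_deriv_zero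
    (b := fun z => ∑ x, pX p x * q x z * r x z) fun z => (pZ_pos hp hq z).ne'
  obtain ⟨hXZ, hXZ''⟩ := affineEntropy_second_deriv_zero
    (b := fun i : X × Z => pX p i.1 * q i.1 i.2 * r i.1 i.2)
    fun i => (mul_pos (pX_pos hp i.1) (hq i.1 i.2)).ne'
  obtain ⟨hYZ, hYZ''⟩ := affineEntropy_second_deriv_zero
    (b := fun i : Y × Z => ∑ x, p x i.1 * q x i.2 * r x i.2) fun i => (pYZ_pos hp hq i.1 i.2).ne'
  have hF'' := (hZ''.sub hXZ'').sub ((hZ''.sub hYZ'').const_mul β)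
  rw [sum_sq_div_eq_termA hp hq, Fintype.sum_prod_type] at hF''
  refine second_deriv_of_eventually_hasDerivAt ?_ (hF''.congr_deriv (by rw [termB, termC]; ring))
  filter_upwards [(eventually_one_add_mul_pos r).eventually_nhds, hZ, hXZ, hYZ]
    with ε hε hZε hXZε hYZε
  have hIB : IBfun p q r β =ᶠ[𝓝 ε] fun t => ((∑ x, negMulLog (pX p x)) + entropyZ p q r t -
      entropyXZ p q r t) - β * ((∑ y, negMulLog (pY p y)) + entropyZ p q r t - entropyYZ p q r t) :=
    hε.mono fun t ht => IBfun_eq_entropy hp hq hqsum hr ht β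
  exact (((hZε.const_add _).sub hXZε).sub (((hZε.const_add _).sub hYZε).const_mul β))
    |>.congr_of_eventuallyEq hIB

/-- Second variation of the IB objective, Eq. (21):
F is twice differentiable at ε = 0 and F″(0) = (A − C) − β (B − C). -/
theorem second_variation_IB [Nonempty X] [Nonempty Y] [Nonempty Z]
    (p : X → Y → ℝ) (q : X → Z → ℝ)
    (hp : ∀ x y, 0 < p x y) (hpsum : ∑ x, ∑ y, p x y = 1)
    (hq : ∀ x z, 0 < q x z) (hqsum : ∀ x, ∑ z, q x z = 1)
    (β : ℝ) (r : X → Z → ℝ) (hr : ∀ x, ∑ z, q x z * r x z = 0) :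
    (∀ᶠ ε in nhds (0 : ℝ), DifferentiableAt ℝ (IBfun p q r β) ε) ∧
    DifferentiableAt ℝ (deriv (IBfun p q r β)) 0 ∧
    deriv (deriv (IBfun p q r β)) 0 =
      (termA p q r - termC p q r) - β * (termB p q r - termC p q r) :=
  second_variation_IB_general p q hp hq hqsum β r hr
end

section
/- (Lemma A.1: variation of the IB objective at every order.) Let r : X × Z → ℝ satisfy ∑_z q(x,z) r(x,z) = 0 for every x. Then for every integer n ≥ 2, F is n times differentiable at ε = 0 and the n-th derivative of F at 0 equals (−1)ⁿ · (n−2)! · [ (∑_{x,z} p(x) q(x,z) r(x,z)ⁿ − ∑_z p(z) r̄(z)ⁿ) − β · (∑_{y,z} p(y,z) r̄(y,z)ⁿ − ∑_z p(z) r̄(z)ⁿ) ]. -/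
/-!
Perturbing along `r` keeps `q_ε` an encoder, so both terms of `F` are mutual informations of
joint laws that are affine in `ε` and have fixed row marginals `p(x)`, resp. `p(y)`. Writing
`I = H(rows) + H(columns) - H(joint)`, the row entropy is constant and every other entropy is a
sum of `negMulLog (a + b ε)`. Since `(t log t)'' = 1/t`, the `n`-th derivative of
`(a + b ε) log (a + b ε)` at `0` is `(-1)ⁿ (n-2)! bⁿ / aⁿ⁻¹ = (-1)ⁿ (n-2)! a (b/a)ⁿ`, and the
ratios `b / a` are `r(x,z)`, `r̄(z)` and `r̄(y,z)`.
-/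


open Finset Filter Matrix

variable {X Y Z : Type*} [Fintype X] [Fintype Y] [Fintype Z]

open Real Topology
open scoped Nat

section AffineReparametrization

variable {𝕜 F : Type*} [NontriviallyNormedField 𝕜] [NormedAddCommGroup F] [NormedSpace 𝕜 F]

theorem iteratedDeriv_comp_mul_left (n : ℕ) (c : 𝕜) (f : 𝕜 → F) :
    iteratedDeriv n (fun x => f (c * x)) = fun x => c ^ n • iteratedDeriv n f (c * x) := by
  induction n with
  | zero => simp
  | succ n ih =>
    funext x
    rw [iteratedDeriv_succ, ih, deriv_fun_const_smul_field, deriv_comp_mul_left, iteratedDeriv_succ,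
      smul_smul, pow_succ]

end AffineReparametrization

theorem iteratedDeriv_negMulLog_add_two (k : ℕ) (x : ℝ) :
    iteratedDeriv (k + 2) negMulLog x = -((-1) ^ k * k ! * x ^ (-1 - k : ℤ)) := by
  have h2 : deriv^[2] negMulLog = -Inv.inv := funext deriv2_negMulLog
  rw [iteratedDeriv_eq_iterate, Function.iterate_add_apply, h2, ← iteratedDeriv_eq_iterate,
    iteratedDeriv_neg, iteratedDeriv_eq_iterate, iter_deriv_inv]

theorem iteratedDeriv_negMulLog_affine {n : ℕ} (hn : 2 ≤ n) (a b : ℝ) :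
    iteratedDeriv n (fun ε => negMulLog (a + b * ε)) 0 =
      -((-1) ^ n * (n - 2)! * (a * (b / a) ^ n)) := by
  obtain ⟨k, rfl⟩ := Nat.exists_eq_add_of_le' hn
  rw [congrFun (iteratedDeriv_comp_mul_left _ b fun t => negMulLog (a + t)) 0, mul_zero,
    iteratedDeriv_comp_const_add]
  simp only [add_zero]
  rw [iteratedDeriv_negMulLog_add_two, smul_eq_mul, Nat.add_sub_cancel, pow_add _ k 2]
  -- At `a = 0` both sides are `0`, through the junk values `0 ^ (-1 - k) = 0` and `b / 0 = 0`.
  rcases eq_or_ne a 0 with rfl | ha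
  · simp [_root_.zero_zpow _ (by omega : (-1 - k : ℤ) ≠ 0)]
  · rw [div_pow, zpow_sub₀ ha, _root_.zpow_neg_one, zpow_natCast]
    field_simp
    ring

theorem contDiffAt_negMulLog_affine {a : ℝ} (ha : a ≠ 0) (b : ℝ) {n : WithTop ℕ∞} :
    ContDiffAt ℝ n (fun ε => negMulLog (a + b * ε)) 0 := by
  have hlog : ContDiffAt ℝ n (fun t => negMulLog t) (a + b * 0) := by
    simp only [negMulLog_def]
    exact contDiffAt_id.neg.mul (contDiffAt_log.2 (by simpa using ha))
  exact hlog.comp 0 (contDiffAt_const.add (contDiffAt_const.mul contDiffAt_id))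

section MutualInformation

variable {ι κ : Type*} [Fintype ι] [Fintype κ]

theorem contDiffAt_sum_negMulLog_affine {a : ι → ℝ} (ha : ∀ i, a i ≠ 0) (b : ι → ℝ)
    {n : WithTop ℕ∞} : ContDiffAt ℝ n (fun ε => ∑ i, negMulLog (a i + b i * ε)) 0 :=
  ContDiffAt.sum fun i _ => contDiffAt_negMulLog_affine (ha i) (b i)

theorem iteratedDeriv_sum_negMulLog_affine {a : ι → ℝ} (ha : ∀ i, a i ≠ 0) (b : ι → ℝ) {n : ℕ}
    (hn : 2 ≤ n) :
    iteratedDeriv n (fun ε => ∑ i, negMulLog (a i + b i * ε)) 0 =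
      -((-1) ^ n * (n - 2)! * ∑ i, a i * (b i / a i) ^ n) := by
  rw [iteratedDeriv_fun_sum fun i _ => contDiffAt_negMulLog_affine (ha i) (b i), mul_sum,
    ← sum_neg_distrib]
  exact sum_congr rfl fun i _ => iteratedDeriv_negMulLog_affine hn _ _

noncomputable def mutualInfo (w : ι → κ → ℝ) : ℝ :=
  ∑ i, ∑ k, w i k * log (w i k / ((∑ k', w i k') * ∑ i', w i' k))

theorem mutualInfo_eq_entropy {w : ι → κ → ℝ} (hw : ∀ i k, 0 < w i k) :
    mutualInfo w = ∑ i, negMulLog (∑ k, w i k) + ∑ k, negMulLog (∑ i, w i k)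
      - ∑ ik : ι × κ, negMulLog (w ik.1 ik.2) := by
  have hrow : ∀ i k, 0 < ∑ k', w i k' := fun i k =>
    (hw i k).trans_le (single_le_sum (fun k' _ => (hw i k').le) (mem_univ k))
  have hcol : ∀ i k, 0 < ∑ i', w i' k := fun i k =>
    (hw i k).trans_le (single_le_sum (fun i' _ => (hw i' k).le) (mem_univ i))
  have hterm : ∀ i k, w i k * log (w i k / ((∑ k', w i k') * ∑ i', w i' k)) =
      w i k * log (w i k) - w i k * log (∑ k', w i k') - w i k * log (∑ i', w i' k) := by
    intro i k
    rw [log_div (hw i k).ne' (mul_pos (hrow i k) (hcol i k)).ne',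
      log_mul (hrow i k).ne' (hcol i k).ne']
    ring
  simp only [mutualInfo, hterm, sum_sub_distrib, negMulLog, Fintype.sum_prod_type, ← sum_mul]
  rw [sum_comm (f := fun i k => w i k * log (∑ i', w i' k))]
  simp only [← sum_mul, neg_mul, sum_neg_distrib]
  ring

variable {w v : ι → κ → ℝ}

theorem mutualInfo_affine_eventuallyEq (hw : ∀ i k, 0 < w i k) (hv : ∀ i, ∑ k, v i k = 0) :
    (fun ε => mutualInfo fun i k => w i k + v i k * ε) =ᶠ[𝓝 0] fun ε =>
      ∑ i, negMulLog (∑ k, w i k) + ∑ k, negMulLog (∑ i, w i k + (∑ i, v i k) * ε)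
        - ∑ ik : ι × κ, negMulLog (w ik.1 ik.2 + v ik.1 ik.2 * ε) := by
  have hpos : ∀ᶠ ε in 𝓝 (0 : ℝ), ∀ i k, 0 < w i k + v i k * ε := by
    simp only [eventually_all]
    intro i k
    have hcont : Continuous fun ε : ℝ => w i k + v i k * ε := by fun_prop
    exact (hcont.tendsto' 0 _ (by simp)).eventually_const_lt (hw i k)
  filter_upwards [hpos] with ε hε
  rw [mutualInfo_eq_entropy hε]
  simp only [sum_add_distrib, ← sum_mul, hv, zero_mul, add_zero]

variable [Nonempty ι]

theorem contDiffAt_mutualInfo_affine (hw : ∀ i k, 0 < w i k) (hv : ∀ i, ∑ k, v i k = 0)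
    {n : WithTop ℕ∞} : ContDiffAt ℝ n (fun ε => mutualInfo fun i k => w i k + v i k * ε) 0 := by
  have hcol : ∀ k, ∑ i, w i k ≠ 0 := fun k => (sum_pos (fun i _ => hw i k) univ_nonempty).ne'
  refine ContDiffAt.congr_of_eventuallyEq ?_ (mutualInfo_affine_eventuallyEq hw hv)
  exact (contDiffAt_const.add (contDiffAt_sum_negMulLog_affine hcol _)).sub
    (contDiffAt_sum_negMulLog_affine (fun ik : ι × κ => (hw ik.1 ik.2).ne') _)

theorem iteratedDeriv_mutualInfo_affine (hw : ∀ i k, 0 < w i k) (hv : ∀ i, ∑ k, v i k = 0)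
    {n : ℕ} (hn : 2 ≤ n) :
    iteratedDeriv n (fun ε => mutualInfo fun i k => w i k + v i k * ε) 0 =
      (-1) ^ n * (n - 2)! * (∑ i, ∑ k, w i k * (v i k / w i k) ^ n
        - ∑ k, (∑ i, w i k) * ((∑ i, v i k) / ∑ i, w i k) ^ n) := by
  have hcol : ∀ k, ∑ i, w i k ≠ 0 := fun k => (sum_pos (fun i _ => hw i k) univ_nonempty).ne'
  have hjoint : ∀ ik : ι × κ, w ik.1 ik.2 ≠ 0 := fun ik => (hw ik.1 ik.2).ne'
  rw [(mutualInfo_affine_eventuallyEq hw hv).iteratedDeriv_eq,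
    iteratedDeriv_fun_sub (contDiffAt_const.add (contDiffAt_sum_negMulLog_affine hcol _))
      (contDiffAt_sum_negMulLog_affine hjoint _),
    iteratedDeriv_const_add (by omega), iteratedDeriv_sum_negMulLog_affine hcol _ hn,
    iteratedDeriv_sum_negMulLog_affine hjoint _ hn, Fintype.sum_prod_type]
  ring

end MutualInformation

theorem sum_sum_mul_eq_sum_pX (p : X → Y → ℝ) (g : X → ℝ) :
    ∑ y, ∑ x, p x y * g x = ∑ x, pX p x * g x := by
  rw [sum_comm]
  simp only [pX, sum_mul]

theorem IBfun_eq_mutualInfo [Nonempty Y] {p : X → Y → ℝ} {q : X → Z → ℝ} {r : X → Z → ℝ}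
    (hp : ∀ x y, 0 < p x y) (hqsum : ∀ x, ∑ z, q x z = 1) (hr : ∀ x, ∑ z, q x z * r x z = 0)
    (β : ℝ) :
    IBfun p q r β = fun ε =>
      mutualInfo (fun x z => pX p x * q x z + pX p x * q x z * r x z * ε)
        - β * mutualInfo (fun y z => pYZ p q y z + (∑ x, p x y * q x z * r x z) * ε) := by
  funext ε
  have hqε : ∀ x, ∑ z, q x z * (1 + ε * r x z) = 1 := fun x => by
    simp only [mul_add, mul_one, sum_add_distrib, mul_left_comm _ ε, ← mul_sum, hqsum, hr,
      mul_zero, add_zero]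
  have hXZ : (fun x z => pX p x * q x z + pX p x * q x z * r x z * ε) =
      fun x z => pX p x * (q x z * (1 + ε * r x z)) := by
    funext x z; ring
  have hYZ : (fun y z => pYZ p q y z + (∑ x, p x y * q x z * r x z) * ε) = pYZe p q r ε := by
    funext y z
    simp only [pYZ, pYZe, sum_mul, ← sum_add_distrib]
    exact sum_congr rfl fun x _ => by ring
  have hpX : ∀ x, pX p x ≠ 0 := fun x => (sum_pos (fun y _ => hp x y) univ_nonempty).ne'
  have hrowXZ : ∀ x, ∑ z, pX p x * (q x z * (1 + ε * r x z)) = pX p x := fun x => by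
    rw [← mul_sum, hqε, mul_one]
  have hrowYZ : ∀ y, ∑ z, pYZe p q r ε y z = pY p y := fun y => by
    simp only [pYZe, pY]
    rw [sum_comm]
    simp only [← mul_sum, hqε, mul_one]
  have hcolXZ : ∀ z, ∑ x, pX p x * (q x z * (1 + ε * r x z)) = pZe p q r ε z := fun z => rfl
  have hcolYZ : ∀ z, ∑ y, pYZe p q r ε y z = pZe p q r ε z :=
    fun z => sum_sum_mul_eq_sum_pX p _
  rw [hXZ, hYZ, IBfun, mutualInfo, mutualInfo]
  simp only [hrowXZ, hcolXZ, hrowYZ, hcolYZ, mul_div_mul_left _ _ (hpX _)]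

theorem nth_variation_IB_general [Nonempty X] [Nonempty Y]
    (p : X → Y → ℝ) (q : X → Z → ℝ)
    (hp : ∀ x y, 0 < p x y)
    (hq : ∀ x z, 0 < q x z) (hqsum : ∀ x, ∑ z, q x z = 1)
    (β : ℝ) (r : X → Z → ℝ) (hr : ∀ x, ∑ z, q x z * r x z = 0)
    (n : ℕ) (hn : 2 ≤ n) :
    ContDiffAt ℝ n (IBfun p q r β) 0 ∧
    iteratedDeriv n (IBfun p q r β) 0 =
      (-1 : ℝ) ^ n * ((n - 2).factorial : ℝ) *
        (((∑ x, ∑ z, pX p x * q x z * r x z ^ n) - ∑ z, pZ p q z * rbarZ p q r z ^ n)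
          - β * ((∑ y, ∑ z, pYZ p q y z * rbarYZ p q r y z ^ n)
              - ∑ z, pZ p q z * rbarZ p q r z ^ n)) := by
  have hXZ : ∀ x z, 0 < pX p x * q x z := fun x z =>
    mul_pos (sum_pos (fun y _ => hp x y) univ_nonempty) (hq x z)
  have hYZ : ∀ y z, 0 < pYZ p q y z := fun y z =>
    sum_pos (fun x _ => mul_pos (hp x y) (hq x z)) univ_nonempty
  have hvXZ : ∀ x, ∑ z, pX p x * q x z * r x z = 0 := fun x => by
    simp only [mul_assoc, ← mul_sum, hr, mul_zero]
  have hvYZ : ∀ y, ∑ z, ∑ x, p x y * q x z * r x z = 0 := fun y => by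
    rw [sum_comm]
    simp only [mul_assoc, ← mul_sum, hr, mul_zero, sum_const_zero]
  have hI₁ := contDiffAt_mutualInfo_affine hXZ hvXZ (n := n)
  have hI₂ := contDiffAt_mutualInfo_affine hYZ hvYZ (n := n)
  rw [IBfun_eq_mutualInfo hp hqsum hr]
  refine ⟨hI₁.sub (contDiffAt_const.mul hI₂), ?_⟩
  rw [iteratedDeriv_fun_sub hI₁ (contDiffAt_const.mul hI₂), iteratedDeriv_const_mul _ hI₂,
    iteratedDeriv_mutualInfo_affine hXZ hvXZ hn, iteratedDeriv_mutualInfo_affine hYZ hvYZ hn]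
  have hr_ratio : ∀ x z, pX p x * q x z * r x z / (pX p x * q x z) = r x z := fun x z =>
    mul_div_cancel_left₀ _ (hXZ x z).ne'
  have hmargZ : ∀ z, ∑ y, pYZ p q y z = pZ p q z := fun z => sum_sum_mul_eq_sum_pX p _
  have hmargZr : ∀ z, ∑ y, ∑ x, p x y * q x z * r x z = ∑ x, pX p x * q x z * r x z :=
    fun z => by simpa only [mul_assoc] using sum_sum_mul_eq_sum_pX p fun x => q x z * r x z
  simp only [hr_ratio, hmargZ, hmargZr, rbarZ, rbarYZ, pZ]
  ring

/-- Lemma A.1: variation of the IB objective at every order n ≥ 2. -/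
theorem nth_variation_IB [Nonempty X] [Nonempty Y] [Nonempty Z]
    (p : X → Y → ℝ) (q : X → Z → ℝ)
    (hp : ∀ x y, 0 < p x y) (hpsum : ∑ x, ∑ y, p x y = 1)
    (hq : ∀ x z, 0 < q x z) (hqsum : ∀ x, ∑ z, q x z = 1)
    (β : ℝ) (r : X → Z → ℝ) (hr : ∀ x, ∑ z, q x z * r x z = 0)
    (n : ℕ) (hn : 2 ≤ n) :
    ContDiffAt ℝ n (IBfun p q r β) 0 ∧
    iteratedDeriv n (IBfun p q r β) 0 =
      (-1 : ℝ) ^ n * ((n - 2).factorial : ℝ) *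
        (((∑ x, ∑ z, pX p x * q x z * r x z ^ n) - ∑ z, pZ p q z * rbarZ p q r z ^ n)
          - β * ((∑ y, ∑ z, pYZ p q y z * rbarYZ p q r y z ^ n)
              - ∑ z, pZ p q z * rbarZ p q r z ^ n)) :=
  nth_variation_IB_general p q hp hq hqsum β r hr n hn
end

section
/- (Lemma F.1: invariance of the threshold quotient under addition of a global representation shift.) Let r : X × Z → ℝ and s : Z → ℝ, and define r′(x,z) = r(x,z) + s(z). Then A(r′) − C(r′) = A(r) − C(r) and B(r′) − C(r′) = B(r) − C(r). In particular the quotient (A(r) − C(r)) / (B(r) − C(r)) is invariant under r ↦ r + s. -/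
/-! Shifting `r` by `s(z)` raises `A`, `B` and `C` by the same amount
`∑_{x,z} p(x) q(x,z) (2 r(x,z) s(z) + s(z)²)`. For `A` this is pointwise. `C` and `B` sum, over the
cells `z` resp. `(y,z)`, the squared weighted sum `S` of `r` divided by the cell weight `W`, and
`s` is constant on a cell, so `(S + W c)² / W = S² / W + 2 S c + W c²`; summing these increments
over the cells gives the same amount because the cell weights of `B` marginalize over `y` to those
of `C`. -/

open Finset Filter Matrix

variable {X Y Z : Type*} [Fintype X] [Fintype Y] [Fintype Z]

lemma sq_sum_mul_add_div_sum {ι : Type*} [Fintype ι] (w v : ι → ℝ) (c : ℝ)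
    (hw : ∀ i, 0 ≤ w i) :
    (∑ i, w i * (v i + c)) ^ 2 / ∑ i, w i
      = (∑ i, w i * v i) ^ 2 / ∑ i, w i + ∑ i, w i * (2 * v i * c + c ^ 2) := by
  have h_num : ∑ i, w i * (v i + c) = ∑ i, w i * v i + (∑ i, w i) * c := by
    simp only [mul_add, sum_add_distrib, sum_mul]
  have h_gain : ∑ i, w i * (2 * v i * c + c ^ 2)
      = 2 * (∑ i, w i * v i) * c + (∑ i, w i) * c ^ 2 := by
    simp only [mul_add, sum_add_distrib, sum_mul, mul_sum]
    congr 1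
    exact sum_congr rfl fun i _ => by ring
  rw [h_num, h_gain]
  by_cases hW : ∑ i, w i = 0
  · -- a zero total of nonnegative weights forces every weight, hence `∑ w v`, to vanish
    have hw0 : ∀ i, w i = 0 := fun i =>
      (sum_eq_zero_iff_of_nonneg fun i _ => hw i).1 hW i (mem_univ i)
    simp [hw0]
  · field_simp
    ring

section Shift

variable (p : X → Y → ℝ) (q : X → Z → ℝ) (r : X → Z → ℝ) (s : Z → ℝ)

noncomputable def shiftGain : ℝ :=
  ∑ x, ∑ z, pX p x * q x z * (2 * r x z * s z + s z ^ 2)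

lemma termA_add_shift :
    termA p q (fun x z => r x z + s z) = termA p q r + shiftGain p q r s := by
  simp only [termA, shiftGain, ← sum_add_distrib]
  exact sum_congr rfl fun x _ => sum_congr rfl fun z _ => by ring

variable {p q}

lemma termC_add_shift (hp : ∀ x y, 0 ≤ p x y) (hq : ∀ x z, 0 ≤ q x z) :
    termC p q (fun x z => r x z + s z) = termC p q r + shiftGain p q r s := by
  have hw : ∀ z x, 0 ≤ pX p x * q x z := fun z x =>
    mul_nonneg (sum_nonneg fun y _ => hp x y) (hq x z)
  simp only [termC, pZ, shiftGain, sum_comm (γ := X), ← sum_add_distrib]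
  exact sum_congr rfl fun z _ =>
    sq_sum_mul_add_div_sum (fun x => pX p x * q x z) (r · z) (s z) (hw z)

lemma termB_add_shift (hp : ∀ x y, 0 ≤ p x y) (hq : ∀ x z, 0 ≤ q x z) :
    termB p q (fun x z => r x z + s z) = termB p q r + shiftGain p q r s := by
  have hw : ∀ y z x, 0 ≤ p x y * q x z := fun y z x => mul_nonneg (hp x y) (hq x z)
  have h_gain : shiftGain p q r s
      = ∑ y, ∑ z, ∑ x, p x y * q x z * (2 * r x z * s z + s z ^ 2) := by
    simp only [shiftGain, pX, sum_mul]
    rw [sum_comm]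
    exact sum_comm_cycle
  simp only [termB, pYZ, h_gain, ← sum_add_distrib]
  exact sum_congr rfl fun y _ => sum_congr rfl fun z _ =>
    sq_sum_mul_add_div_sum (fun x => p x y * q x z) (r · z) (s z) (hw y z)

end Shift

theorem invariance_global_shift_general
    (p : X → Y → ℝ) (q : X → Z → ℝ)
    (hp : ∀ x y, 0 < p x y)
    (hq : ∀ x z, 0 < q x z)
    (r : X → Z → ℝ) (s : Z → ℝ) (r' : X → Z → ℝ)
    (hr' : ∀ x z, r' x z = r x z + s z) :
    termA p q r' - termC p q r' = termA p q r - termC p q r ∧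
    termB p q r' - termC p q r' = termB p q r - termC p q r ∧
    (termA p q r - termC p q r) / (termB p q r - termC p q r)
      = (termA p q r' - termC p q r') / (termB p q r' - termC p q r') := by
  obtain rfl : r' = fun x z => r x z + s z := funext fun x => funext (hr' x)
  have hp₀ : ∀ x y, 0 ≤ p x y := fun x y => (hp x y).le
  have hq₀ : ∀ x z, 0 ≤ q x z := fun x z => (hq x z).le
  rw [termA_add_shift, termB_add_shift r s hp₀ hq₀, termC_add_shift r s hp₀ hq₀]
  refine ⟨by ring, by ring, by ring_nf⟩

/-- Lemma F.1: invariance of the threshold quotient under a global shift r ↦ r + s. -/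
theorem invariance_global_shift [Nonempty X] [Nonempty Y] [Nonempty Z]
    (p : X → Y → ℝ) (q : X → Z → ℝ)
    (hp : ∀ x y, 0 < p x y) (hpsum : ∑ x, ∑ y, p x y = 1)
    (hq : ∀ x z, 0 < q x z) (hqsum : ∀ x, ∑ z, q x z = 1)
    (r : X → Z → ℝ) (s : Z → ℝ) (r' : X → Z → ℝ)
    (hr' : ∀ x z, r' x z = r x z + s z) :
    termA p q r' - termC p q r' = termA p q r - termC p q r ∧
    termB p q r' - termC p q r' = termB p q r - termC p q r ∧
    (termA p q r - termC p q r) / (termB p q r - termC p q r)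
      = (termA p q r' - termC p q r') / (termB p q r' - termC p q r') :=
  invariance_global_shift_general p q hp hq r s r' hr'
end

section
/- (Lemma 1: the second-variation nonnegativity condition is equivalent to β ≤ G.) Let β ∈ ℝ and let Q denote the set of r : X × Z → ℝ with ∑_z q(x,z) r(x,z) = 0 for every x. Then the following are equivalent: (1) for every r ∈ Q, (A(r) − C(r)) − β · (B(r) − C(r)) ≥ 0; (2) for every r ∈ Q with B(r) − C(r) > 0, β ≤ (A(r) − C(r)) / (B(r) − C(r)). -/
open Finset Filter Matrix

variable {X Y Z : Type*} [Fintype X] [Fintype Y] [Fintype Z]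

/-!
Both `A - C` and `B - C` are nonnegative: for each `z`, `C` is the squared mean of `r(·, z)`
under the weights `p(x) q(x, z)`, so `C ≤ A` and `C ≤ B` are the Cauchy–Schwarz (Jensen) gaps
for `r` itself and for its conditional means `r̄(y, z)`. Given `a, b ≥ 0`, the inequality
`a - β b ≥ 0` is automatic when `b = 0` and equivalent to `β ≤ a / b` when `b > 0`.
-/

theorem sq_sum_div_le_sum_sq_div_of_nonneg {ι R : Type*} [Semifield R] [LinearOrder R]
    [IsStrictOrderedRing R] [ExistsAddOfLE R] (s : Finset ι) (f g : ι → R)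
    (hg : ∀ i ∈ s, 0 ≤ g i) (hfg : ∀ i ∈ s, g i = 0 → f i = 0) :
    (∑ i ∈ s, f i) ^ 2 / ∑ i ∈ s, g i ≤ ∑ i ∈ s, f i ^ 2 / g i := by
  have H : ∀ i ∈ s, 0 ≤ f i ^ 2 / g i := fun i hi ↦ div_nonneg (sq_nonneg _) (hg i hi)
  refine div_le_of_le_mul₀ (sum_nonneg hg) (sum_nonneg H)
    (sum_sq_le_sum_mul_sum_of_sq_le_mul _ H hg fun i hi ↦ ?_)
  rcases eq_or_ne (g i) 0 with hgi | hgi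
  · simp [hfg i hi hgi]
  · rw [div_mul_cancel₀ _ hgi]

theorem sq_sum_mul_div_sum_le_sum_mul_sq {ι R : Type*} [Semifield R] [LinearOrder R]
    [IsStrictOrderedRing R] [ExistsAddOfLE R] (s : Finset ι) (w f : ι → R)
    (hw : ∀ i ∈ s, 0 ≤ w i) :
    (∑ i ∈ s, w i * f i) ^ 2 / ∑ i ∈ s, w i ≤ ∑ i ∈ s, w i * f i ^ 2 := by
  refine (sq_sum_div_le_sum_sq_div_of_nonneg s _ w hw fun i _ hwi ↦ by simp [hwi]).trans_eq
    (sum_congr rfl fun i _ ↦ ?_)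
  rcases eq_or_ne (w i) 0 with hwi | hwi
  · simp [hwi]
  · field_simp

section

variable (p : X → Y → ℝ) (q : X → Z → ℝ) (r : X → Z → ℝ)

theorem termC_le_termA (hp : ∀ x y, 0 ≤ p x y) (hq : ∀ x z, 0 ≤ q x z) :
    termC p q r ≤ termA p q r := by
  rw [termA, sum_comm]
  exact sum_le_sum fun z _ ↦ sq_sum_mul_div_sum_le_sum_mul_sq _ _ _ fun x _ ↦
    mul_nonneg (sum_nonneg fun y _ ↦ hp x y) (hq x z)

theorem termC_le_termB (hp : ∀ x y, 0 ≤ p x y) (hq : ∀ x z, 0 ≤ q x z) :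
    termC p q r ≤ termB p q r := by
  rw [termB, sum_comm]
  refine sum_le_sum fun z _ ↦ le_of_eq_of_le ?_ (sq_sum_div_le_sum_sq_div_of_nonneg _
    (fun y ↦ ∑ x, p x y * q x z * r x z) (fun y ↦ pYZ p q y z)
    (fun y _ ↦ sum_nonneg fun x _ ↦ mul_nonneg (hp x y) (hq x z)) fun y _ hyz ↦ ?_)
  · simp only [pZ, pYZ, pX]
    rw [sum_comm (f := fun y x ↦ p x y * q x z * r x z), sum_comm (f := fun y x ↦ p x y * q x z)]
    simp only [sum_mul]
  · rw [pYZ, sum_eq_zero_iff_of_nonneg fun x _ ↦ mul_nonneg (hp x y) (hq x z)] at hyz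
    exact sum_eq_zero fun x hx ↦ by rw [hyz x hx, zero_mul]

end

theorem sub_mul_nonneg_iff_imp_le_div {a b β : ℝ} (ha : 0 ≤ a) (hb : 0 ≤ b) :
    0 ≤ a - β * b ↔ (0 < b → β ≤ a / b) := by
  rcases hb.eq_or_lt with rfl | hb
  · simp [ha]
  · rw [le_div_iff₀ hb, sub_nonneg]
    simp [hb]

theorem second_variation_nonneg_iff_general
    (p : X → Y → ℝ) (q : X → Z → ℝ)
    (hp : ∀ x y, 0 < p x y)
    (hq : ∀ x z, 0 < q x z)
    (β : ℝ) :
    (∀ r : X → Z → ℝ, (∀ x, ∑ z, q x z * r x z = 0) →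
        (termA p q r - termC p q r) - β * (termB p q r - termC p q r) ≥ 0) ↔
    (∀ r : X → Z → ℝ, (∀ x, ∑ z, q x z * r x z = 0) →
        0 < termB p q r - termC p q r →
          β ≤ (termA p q r - termC p q r) / (termB p q r - termC p q r)) := by
  have hp' x y := (hp x y).le
  have hq' x z := (hq x z).le
  exact forall_congr' fun r ↦ imp_congr_right fun _ ↦ sub_mul_nonneg_iff_imp_le_div
    (sub_nonneg.2 (termC_le_termA p q r hp' hq')) (sub_nonneg.2 (termC_le_termB p q r hp' hq'))

/-- Lemma 1: the second-variation nonnegativity condition is equivalent to β ≤ G. -/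
theorem second_variation_nonneg_iff [Nonempty X] [Nonempty Y] [Nonempty Z]
    (p : X → Y → ℝ) (q : X → Z → ℝ)
    (hp : ∀ x y, 0 < p x y) (hpsum : ∑ x, ∑ y, p x y = 1)
    (hq : ∀ x z, 0 < q x z) (hqsum : ∀ x, ∑ z, q x z = 1)
    (β : ℝ) :
    (∀ r : X → Z → ℝ, (∀ x, ∑ z, q x z * r x z = 0) →
        (termA p q r - termC p q r) - β * (termB p q r - termC p q r) ≥ 0) ↔
    (∀ r : X → Z → ℝ, (∀ x, ∑ z, q x z * r x z = 0) →
        0 < termB p q r - termC p q r →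
          β ≤ (termA p q r - termC p q r) / (termB p q r - termC p q r)) :=
  second_variation_nonneg_iff_general p q hp hq β
end
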